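/- (Claim 3.3.) For every deterministic incremental retrieval scheme (F, G, Query) in the model and every real S ≥ H(F): if i is drawn uniformly from {1, …, m}, independently of the process, then the expected size of the plausible set satisfies E_{i, A, R_A}[ |P_i(F(A, R_A))| ] ≥ (u/m) · 2^{v − 1} · 2^{−S/m}. -/

import Mathlib

noncomputable section

namespace Retrieval

/-! ### Entropy on a finite sample space with the uniform distribution -/

/-- The probability of an event `s` under the uniform distribution on a finite type `Ω`. -/
def unifPr (Ω : Type*) [Fintype Ω] (s : Set Ω) : ℝ :=
  (Nat.card s : ℝ) / (Fintype.card Ω : ℝ)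

/-- The Shannon entropy (in bits) of a random variable `X` defined on a finite sample
space `Ω` carrying the uniform distribution. -/
def entropy {Ω : Type*} {α : Type*} [Fintype Ω] (X : Ω → α) : ℝ :=
  (∑ ω : Ω, -Real.logb 2 (unifPr Ω {ω' | X ω' = X ω})) / (Fintype.card Ω : ℝ)

/-- The conditional Shannon entropy `H(X | Y) = H(X, Y) − H(Y)` (in bits). -/
def condEntropy {Ω : Type*} {α β : Type*} [Fintype Ω] (X : Ω → α) (Y : Ω → β) : ℝ :=
  entropy (fun ω => (X ω, Y ω)) - entropy Y

/-- The first bit of a `v`-bit string. -/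
def firstBit {v : ℕ} (r : Fin v → Bool) : Bool :=
  if h : 0 < v then r ⟨0, h⟩ else false

/-! ### The incremental random process

Parameters `n v u`.  The universe `[u]` is split into `m = n − n/v` consecutive parts,
each of size `u/m`.  An element of the `i`-th part is identified by its position
`a ∈ Fin (u/m)` inside the part; as a natural number it is the key `i·(u/m) + a`. -/

variable (n v u : ℕ)

/-- `m = n − n/v`, the number of parts of the universe. -/
def M : ℕ := n - n / v

/-- `u/m`, the size of each part of the universe. -/
def W : ℕ := u / M n v

/-- The key (element of `[u]`, 0-indexed) at position `a` of part `i`. -/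
def key (i : Fin (M n v)) (a : Fin (W n v u)) : ℕ := (i : ℕ) * W n v u + (a : ℕ)

/-- The model hypotheses on the parameters: `2 ≤ v ≤ log₂ n`, `v ∣ n`,
`m = n − n/v` divides `u`, and `u ≥ n³`. -/
def Hyp : Prop :=
  2 ≤ v ∧ (v : ℝ) ≤ Real.logb 2 n ∧ v ∣ n ∧ M n v ∣ u ∧ n ^ 3 ≤ u

/-- Raw data of a realization of the incremental random process:
`((A, R_A), (P_B, B, R_B))`.  `A i` is the (position of the) element of `A` in part `i`
and `R_A i` its `v`-bit value; `P_B` is the set of parts from which `B` samples, `B i` the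
element of `B` in part `i` (for `i ∈ P_B`; it is a canonical junk value `0` otherwise) and
`R_B i` its value (a canonical junk value otherwise). -/
abbrev IncData : Type :=
  ((Fin (M n v) → Fin (W n v u)) × (Fin (M n v) → Fin v → Bool)) ×
    (Finset (Fin (M n v)) × (Fin (M n v) → Fin (W n v u)) × (Fin (M n v) → Fin v → Bool))

/-- Validity of a realization of `(A, R_A)`: every value has first bit `0`
(the set `A` itself is unconstrained). -/
def ValidAR (_A : Fin (M n v) → Fin (W n v u)) (RA : Fin (M n v) → Fin v → Bool) : Prop :=
  ∀ j, firstBit (RA j) = false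

/-- Validity of a realization `(P_B, B)` given `A`: `|P_B| = n/v`, for `i ∈ P_B` the
element `B i` avoids `A i`, and outside `P_B` the function `B` takes a canonical junk
value (so that `(P_B, B)` carries exactly the information of the indexed family
`(b_i)_{i ∈ P_B}`). -/
def ValidB (A : Fin (M n v) → Fin (W n v u)) (P : Finset (Fin (M n v)))
    (B : Fin (M n v) → Fin (W n v u)) : Prop :=
  P.card = n / v ∧ (∀ j ∈ P, B j ≠ A j) ∧ ∀ j ∉ P, (B j : ℕ) = 0

/-- Validity of a realization of `R_B` given `P_B`: for `i ∈ P_B` the value has first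
bit `1`; outside `P_B` it is a canonical junk value. -/
def ValidRB (P : Finset (Fin (M n v))) (RB : Fin (M n v) → Fin v → Bool) : Prop :=
  (∀ j ∈ P, firstBit (RB j) = true) ∧ ∀ j ∉ P, RB j = fun _ => false

/-- Validity of a full realization of the incremental process. -/
def IncValid (d : IncData n v u) : Prop :=
  ValidAR n v u d.1.1 d.1.2 ∧ ValidB n v u d.1.1 d.2.1 d.2.2.1 ∧ ValidRB n v d.2.1 d.2.2.2

/-- The sample space of the incremental random process: since every random choice in the
process is uniform (subject to the stated constraints, whose number of options does not
depend on the previous choices), the joint distribution of `(A, R_A, P_B, B, R_B)` is the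
uniform distribution on the set of valid realizations. -/
abbrev IncOmega : Type := {d : IncData n v u // IncValid n v u d}

noncomputable instance : Fintype (IncOmega n v u) := Fintype.ofFinite _

/-- The type of the (deterministic) map `F`, building a bit string from a realization of
`(A, R_A)`. -/
abbrev FBuilder : Type :=
  (Fin (M n v) → Fin (W n v u)) → (Fin (M n v) → Fin v → Bool) → List Bool

/-- The type of the (deterministic) map `G`, building a bit string from a bit string
together with a realization of `(B, R_B)` (given as `(P_B, B, R_B)`). -/
abbrev GBuilder : Type :=
  List Bool → Finset (Fin (M n v)) → (Fin (M n v) → Fin (W n v u)) →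
    (Fin (M n v) → Fin v → Bool) → List Bool

/-- The type of the (deterministic) query map: a bit string and a key give a `v`-bit
value. -/
abbrev QueryFn (v : ℕ) : Type := List Bool → ℕ → Fin v → Bool

/-- The random bit string `F = F(A, R_A)`. -/
def Frv (F : FBuilder n v u) (ω : IncOmega n v u) : List Bool := F ω.1.1.1 ω.1.1.2

/-- The random bit string `G = G(F(A, R_A), B, R_B)`. -/
def Grv (F : FBuilder n v u) (G : GBuilder n v u) (ω : IncOmega n v u) : List Bool :=
  G (Frv n v u F ω) ω.1.2.1 ω.1.2.2.1 ω.1.2.2.2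

/-- The random variable `B` (together with the set of parts `P_B` it samples from). -/
def Brv (ω : IncOmega n v u) : Finset (Fin (M n v)) × (Fin (M n v) → Fin (W n v u)) :=
  (ω.1.2.1, ω.1.2.2.1)

/-- The random variable `(B, R_B)`. -/
def BRrv (ω : IncOmega n v u) :
    Finset (Fin (M n v)) × (Fin (M n v) → Fin (W n v u)) × (Fin (M n v) → Fin v → Bool) :=
  ω.1.2

/-- Correctness of an incremental retrieval scheme `(F, G, Query)`: on every realization
in the support of the process, querying `F(A,R_A)` with a key of `A` returns its value,
and querying `G(F(A,R_A),B,R_B)` with a key of `A` or of `B` returns its value. -/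
def Correct (F : FBuilder n v u) (G : GBuilder n v u) (Q : QueryFn v) : Prop :=
  ∀ ω : IncOmega n v u,
    (∀ i, Q (Frv n v u F ω) (key n v u i (ω.1.1.1 i)) = ω.1.1.2 i) ∧
    (∀ i, Q (Grv n v u F G ω) (key n v u i (ω.1.1.1 i)) = ω.1.1.2 i) ∧
    (∀ i ∈ ω.1.2.1, Q (Grv n v u F G ω) (key n v u i (ω.1.2.2.1 i)) = ω.1.2.2.2 i)

/-- The plausible set `P_i(f)`: all pairs `(x, r)` of an element `x` of part `i` and a
`v`-bit value `r` with first bit `0` such that some realization `(A', R'_{A'})` in the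
support of `(A, R_A)` has `F(A', R'_{A'}) = f`, `x` the element of `A'` in part `i`, and
`r` its value. -/
def Plausible (F : FBuilder n v u) (f : List Bool) (i : Fin (M n v)) :
    Set (Fin (W n v u) × (Fin v → Bool)) :=
  {p | ∃ A' RA', ValidAR n v u A' RA' ∧ F A' RA' = f ∧ A' i = p.1 ∧ RA' i = p.2}

/-- A pair `(x, r) ∈ P_i(f)` *remains feasible after `B`* (given as `(P_B, B)`) if the
witness `(A', R'_{A'})` can additionally be chosen with `A' ∩ B = ∅`. -/
def Feasible (F : FBuilder n v u) (f : List Bool) (i : Fin (M n v))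
    (P : Finset (Fin (M n v))) (B : Fin (M n v) → Fin (W n v u))
    (p : Fin (W n v u) × (Fin v → Bool)) : Prop :=
  ∃ A' RA', ValidAR n v u A' RA' ∧ F A' RA' = f ∧ A' i = p.1 ∧ RA' i = p.2 ∧
    ∀ j ∈ P, B j ≠ A' j

end Retrieval

namespace Retrieval

/-!
The realizations of `(A, R_A)` are equally likely; let `N` be their number. A realization with
`F(A, R_A) = f` is determined by its coordinates `(a_i, r_i) ∈ P_i(f)`, so the level set of `f`
has at most `∏ᵢ |P_i(f)|` elements. Averaging `log₂` of this bound over all realizations gives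
`log₂ N − H(F) ≤ ∑ᵢ E[log₂ |P_i(F)|]`, and by Jensen the right side is at most
`m · log₂ E_{i}[|P_i(F)|]`. Together with `N ≥ ((u/m) · 2^{v−1})^m` and `H(F) ≤ S` this is the
claim after exponentiating.

`H(F)` is defined on the whole process, but it equals the entropy of `F` on the marginal of
`(A, R_A)`: every `A` has equally many extensions `(P_B, B, R_B)`, since exchanging `a_i` and
`a'_i` in every part maps the extensions of `A` bijectively onto those of `A'`.
-/

lemma sum_indicator_setOf_eq_sum_subtype {α : Type*} [Fintype α] (p : α → Prop)
    [Fintype {a // p a}] (f : α → ℝ) :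
    ∑ a, Set.indicator {a | p a} f a = ∑ a : {a // p a}, f a := by
  classical
  simp only [Set.indicator_apply, Set.mem_ofPred_eq]
  rw [← Finset.sum_filter]
  exact Finset.sum_subtype _ (by simp) f

section Entropy

open Finset

variable {Ω Ω' ι α : Type*} [Fintype Ω] [Fintype Ω']

lemma sum_comp_of_card_fiber_eq {β : Type*} [AddCommMonoid β] (π : Ω → Ω') (K : ℕ)
    (hπ : ∀ d, Nat.card {ω // π ω = d} = K) (g : Ω' → β) :
    ∑ ω, g (π ω) = K • ∑ d, g d := by
  classical
  rw [← sum_fiberwise_of_maps_to' (fun ω _ => mem_univ (π ω)) g, smul_sum]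
  refine sum_congr rfl fun d _ => ?_
  rw [sum_const, ← hπ d, Nat.card_eq_fintype_card, Fintype.card_subtype]

lemma card_eq_of_card_fiber_eq (π : Ω → Ω') (K : ℕ) (hπ : ∀ d, Nat.card {ω // π ω = d} = K) :
    Fintype.card Ω = K * Fintype.card Ω' := by
  simpa [card_univ] using sum_comp_of_card_fiber_eq π K hπ (fun _ => (1 : ℕ))

lemma unifPr_preimage_of_card_fiber_eq (π : Ω → Ω') {K : ℕ} (hK : K ≠ 0)
    (hπ : ∀ d, Nat.card {ω // π ω = d} = K) (s : Set Ω') :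
    unifPr Ω (π ⁻¹' s) = unifPr Ω' s := by
  classical
  have hcard : Nat.card (π ⁻¹' s) = K * Nat.card s := by
    have := sum_comp_of_card_fiber_eq π K hπ (fun d => if d ∈ s then 1 else 0)
    rw [← card_filter, ← card_filter, smul_eq_mul] at this
    rw [Nat.card_eq_fintype_card, Nat.card_eq_fintype_card, Fintype.card_subtype,
      Fintype.card_subtype]
    exact this
  rw [unifPr, unifPr, hcard, card_eq_of_card_fiber_eq π K hπ]
  push_cast
  exact mul_div_mul_left _ _ (by exact_mod_cast hK)

lemma entropy_comp_of_card_fiber_eq (π : Ω → Ω') {K : ℕ} (hK : K ≠ 0)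
    (hπ : ∀ d, Nat.card {ω // π ω = d} = K) (X : Ω' → α) :
    entropy (X ∘ π) = entropy X := by
  have hpr (ω : Ω) : unifPr Ω {ω' | X (π ω') = X (π ω)} = unifPr Ω' {d | X d = X (π ω)} :=
    unifPr_preimage_of_card_fiber_eq π hK hπ {d | X d = X (π ω)}
  simp only [entropy, Function.comp_apply, hpr]
  rw [sum_comp_of_card_fiber_eq π K hπ (fun d => -Real.logb 2 (unifPr Ω' {d' | X d' = X d})),
    card_eq_of_card_fiber_eq π K hπ, nsmul_eq_mul]
  push_cast
  exact mul_div_mul_left _ _ (by exact_mod_cast hK)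

lemma sum_logb_card_level_eq (X : Ω → α) :
    ∑ ω, Real.logb 2 (Nat.card {ω' // X ω' = X ω}) =
      Fintype.card Ω * (Real.logb 2 (Fintype.card Ω) - entropy X) := by
  rcases isEmpty_or_nonempty Ω with hΩ | hΩ
  · simp
  have hN : (Fintype.card Ω : ℝ) ≠ 0 := by positivity
  have hterm (ω : Ω) : Real.logb 2 (Nat.card {ω' // X ω' = X ω}) +
      -Real.logb 2 (unifPr Ω {ω' | X ω' = X ω}) = Real.logb 2 (Fintype.card Ω) := by
    have : Nonempty {ω' // X ω' = X ω} := ⟨⟨ω, rfl⟩⟩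
    have hc : (Nat.card {ω' // X ω' = X ω} : ℝ) ≠ 0 := Nat.cast_ne_zero.2 Nat.card_pos.ne'
    rw [unifPr, Set.coe_ofPred, Real.logb_div hc hN]
    ring
  rw [entropy, mul_sub, mul_div_cancel₀ _ hN, eq_sub_iff_add_eq, ← sum_add_distrib]
  simp [hterm]

lemma avg_logb_le_logb_avg [Fintype ι] [Nonempty ι] (z : ι → ℝ) (hz : ∀ i, 0 < z i) :
    (∑ i, Real.logb 2 (z i)) / Fintype.card ι ≤ Real.logb 2 ((∑ i, z i) / Fintype.card ι) := by
  have hw : ∑ _i : ι, (Fintype.card ι : ℝ)⁻¹ = 1 := by simp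
  have := (strictConcaveOn_log_Ioi.concaveOn).le_map_sum (t := univ)
    (fun _ _ => by positivity) hw (fun i _ => Set.mem_Ioi.2 (hz i))
  simp only [smul_eq_mul, ← mul_sum] at this
  simp only [Real.logb, ← sum_div, div_eq_inv_mul _ (Fintype.card ι : ℝ)]
  rw [div_eq_mul_inv, div_eq_mul_inv, mul_comm _ (Real.log 2)⁻¹, mul_comm _ (Real.log 2)⁻¹,
    mul_left_comm]
  exact mul_le_mul_of_nonneg_left this (inv_nonneg.2 (Real.log_nonneg one_le_two))

lemma pos_of_card_level_le_prod [Fintype ι] {X : Ω → α} {q : ι → ℕ} {ω : Ω}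
    (h : Nat.card {ω' // X ω' = X ω} ≤ ∏ i, q i) (i : ι) : 0 < q i := by
  have : Nonempty {ω' // X ω' = X ω} := ⟨⟨ω, rfl⟩⟩
  exact Nat.pos_of_ne_zero (prod_ne_zero_iff.1 (Nat.card_pos.trans_le h).ne' i (mem_univ i))

lemma card_mul_logb_card_sub_entropy_le [Fintype ι] (X : Ω → α) (q : Ω → ι → ℕ)
    (hX : ∀ ω, Nat.card {ω' // X ω' = X ω} ≤ ∏ i, q ω i) :
    Fintype.card Ω * (Real.logb 2 (Fintype.card Ω) - entropy X) ≤
      ∑ ω, ∑ i, Real.logb 2 (q ω i) := by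
  rw [← sum_logb_card_level_eq]
  gcongr with ω
  have : Nonempty {ω' // X ω' = X ω} := ⟨⟨ω, rfl⟩⟩
  have hq (i : ι) (_ : i ∈ univ) : (q ω i : ℝ) ≠ 0 :=
    Nat.cast_ne_zero.2 (pos_of_card_level_le_prod (hX ω) i).ne'
  rw [← Real.logb_prod _ _ hq]
  exact Real.logb_le_logb_of_le one_lt_two (by exact_mod_cast Nat.card_pos) (by exact_mod_cast hX ω)

theorem card_rpow_mul_two_rpow_neg_entropy_le [Nonempty Ω] [Fintype ι] [Nonempty ι]
    (X : Ω → α) (q : Ω → ι → ℕ) (hX : ∀ ω, Nat.card {ω' // X ω' = X ω} ≤ ∏ i, q ω i) :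
    (Fintype.card Ω : ℝ) ^ (Fintype.card ι : ℝ)⁻¹ * 2 ^ (-(entropy X / Fintype.card ι)) ≤
      (∑ i, ∑ ω, (q ω i : ℝ)) / (Fintype.card ι * Fintype.card Ω) := by
  set N : ℝ := (Fintype.card Ω : ℝ)
  set m : ℝ := (Fintype.card ι : ℝ)
  have hN : 0 < N := by positivity
  have hm : 0 < m := by positivity
  have hq (ω : Ω) (i : ι) : (0 : ℝ) < q ω i := by
    exact_mod_cast pos_of_card_level_le_prod (hX ω) i
  have hjensen := avg_logb_le_logb_avg (fun p : Ω × ι => (q p.1 p.2 : ℝ)) fun p => hq p.1 p.2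
  rw [Fintype.sum_prod_type, Fintype.sum_prod_type, Fintype.card_prod, Nat.cast_mul,
    sum_comm (f := fun ω i => (q ω i : ℝ)), mul_comm N] at hjensen
  have havg : 0 < (∑ i, ∑ ω, (q ω i : ℝ)) / (m * N) := by
    have := sum_pos (fun i _ => sum_pos (fun ω _ => hq ω i) univ_nonempty)
      (univ_nonempty (α := ι))
    positivity
  have hexponent : (Real.logb 2 N - entropy X) / m ≤ (∑ ω, ∑ i, Real.logb 2 (q ω i)) / (m * N) := by
    rw [show (Real.logb 2 N - entropy X) / m = N * (Real.logb 2 N - entropy X) / (m * N) by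
      field_simp]
    gcongr
    exact card_mul_logb_card_sub_entropy_le X q hX
  calc N ^ m⁻¹ * 2 ^ (-(entropy X / m))
      = 2 ^ ((Real.logb 2 N - entropy X) / m) := by
        rw [sub_div, sub_eq_add_neg, Real.rpow_add two_pos, div_eq_mul_inv (Real.logb 2 N),
          Real.rpow_mul zero_le_two, Real.rpow_logb two_pos (by norm_num) hN]
    _ ≤ 2 ^ Real.logb 2 ((∑ i, ∑ ω, (q ω i : ℝ)) / (m * N)) :=
        Real.rpow_le_rpow_of_exponent_le one_le_two (hexponent.trans hjensen)
    _ = (∑ i, ∑ ω, (q ω i : ℝ)) / (m * N) := Real.rpow_logb two_pos (by norm_num) havg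

end Entropy

section Model

variable {n v u : ℕ}

lemma Hyp.four_le (h : Hyp n v u) : 4 ≤ n := by
  obtain ⟨hv, hlog, -⟩ := h
  have hn : n ≠ 0 := by
    rintro rfl
    have : (2 : ℝ) ≤ v := by exact_mod_cast hv
    simp at hlog
    linarith
  have h2 : (2 : ℝ) ≤ Real.logb 2 n := le_trans (by exact_mod_cast hv) hlog
  rw [Real.le_logb_iff_rpow_le one_lt_two (by positivity)] at h2
  exact_mod_cast (show (4 : ℝ) = 2 ^ (2 : ℝ) by norm_num) ▸ h2

lemma Hyp.M_pos (h : Hyp n v u) : 0 < M n v :=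
  Nat.sub_pos_of_lt (Nat.div_lt_self (by linarith [h.four_le]) (by linarith [h.1]))

lemma Hyp.div_le_M (h : Hyp n v u) : n / v ≤ M n v := by
  obtain ⟨hv, -, hvn, -⟩ := h
  have : 2 * (n / v) ≤ v * (n / v) := Nat.mul_le_mul_right _ hv
  rw [Nat.mul_div_cancel' hvn] at this
  unfold M
  omega

lemma Hyp.u_eq (h : Hyp n v u) : u = M n v * W n v u :=
  (Nat.mul_div_cancel' h.2.2.2.1).symm

lemma Hyp.two_le_W (h : Hyp n v u) : 2 ≤ W n v u := by
  have hn := h.four_le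
  have hMn : M n v ≤ n := Nat.sub_le _ _
  have hu : n ^ 3 ≤ u := h.2.2.2.2
  have : 2 * n ≤ n ^ 3 :=
    calc 2 * n ≤ n ^ 2 * n := Nat.mul_le_mul_right n (by nlinarith)
      _ = n ^ 3 := by ring
  exact (Nat.le_div_iff_mul_le h.M_pos).2 (by linarith)

abbrev ARSupport (n v u : ℕ) : Type :=
  {d : (Fin (M n v) → Fin (W n v u)) × (Fin (M n v) → Fin v → Bool) // ValidAR n v u d.1 d.2}

instance : Fintype (ARSupport n v u) := Fintype.ofFinite _

abbrev BExtension (A : Fin (M n v) → Fin (W n v u)) : Type :=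
  {e : Finset (Fin (M n v)) × (Fin (M n v) → Fin (W n v u)) × (Fin (M n v) → Fin v → Bool) //
    ValidB n v u A e.1 e.2.1 ∧ ValidRB n v e.1 e.2.2}

def toAR (ω : IncOmega n v u) : ARSupport n v u := ⟨ω.1.1, ω.2.1⟩

def frvAR (F : FBuilder n v u) (d : ARSupport n v u) : List Bool := F d.1.1 d.1.2

def fiberToAREquiv (d : ARSupport n v u) :
    {ω : IncOmega n v u // toAR ω = d} ≃ BExtension d.1.1 where
  toFun ω := ⟨ω.1.1.2, by
    obtain ⟨⟨⟨⟨A, RA⟩, e⟩, hω⟩, rfl⟩ := ω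
    exact hω.2⟩
  invFun e := ⟨⟨⟨d.1, e.1⟩, d.2, e.2⟩, rfl⟩
  left_inv := by
    rintro ⟨⟨⟨d', e⟩, hω⟩, rfl⟩
    rfl
  right_inv _ := rfl

def swapOn (A A' : Fin (M n v) → Fin (W n v u)) (P : Finset (Fin (M n v)))
    (B : Fin (M n v) → Fin (W n v u)) (j : Fin (M n v)) : Fin (W n v u) :=
  if j ∈ P then Equiv.swap (A j) (A' j) (B j) else B j

lemma ValidB.swapOn {A A' B : Fin (M n v) → Fin (W n v u)} {P : Finset (Fin (M n v))}
    (hB : ValidB n v u A P B) : ValidB n v u A' P (swapOn A A' P B) := by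
  obtain ⟨hcard, havoid, hjunk⟩ := hB
  refine ⟨hcard, fun j hj heq => havoid j hj ?_, fun j hj => ?_⟩
  · rw [Retrieval.swapOn, if_pos hj, Equiv.swap_apply_eq_iff, Equiv.swap_apply_right] at heq
    exact heq
  · rw [Retrieval.swapOn, if_neg hj]
    exact hjunk j hj

lemma swapOn_swapOn (A A' : Fin (M n v) → Fin (W n v u)) (P : Finset (Fin (M n v)))
    (B : Fin (M n v) → Fin (W n v u)) : swapOn A' A P (swapOn A A' P B) = B := by
  funext j
  by_cases hj : j ∈ P
  · rw [swapOn, swapOn, if_pos hj, if_pos hj, Equiv.swap_comm, Equiv.swap_apply_self]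
  · rw [swapOn, swapOn, if_neg hj, if_neg hj]

def bExtensionEquiv (A A' : Fin (M n v) → Fin (W n v u)) : BExtension A ≃ BExtension A' where
  toFun e := ⟨⟨e.1.1, swapOn A A' e.1.1 e.1.2.1, e.1.2.2⟩, e.2.1.swapOn, e.2.2⟩
  invFun e := ⟨⟨e.1.1, swapOn A' A e.1.1 e.1.2.1, e.1.2.2⟩, e.2.1.swapOn, e.2.2⟩
  left_inv e := by simp only [swapOn_swapOn]
  right_inv e := by simp only [swapOn_swapOn]

lemma Hyp.bExtension_nonempty (hyp : Hyp n v u) (A : Fin (M n v) → Fin (W n v u)) :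
    Nonempty (BExtension A) := by
  classical
  obtain ⟨P, -, hP⟩ := Finset.exists_subset_card_eq
    (s := (Finset.univ : Finset (Fin (M n v)))) (n := n / v) (by simpa using hyp.div_le_M)
  have hW := hyp.two_le_W
  let x : Fin (W n v u) := ⟨0, by omega⟩
  let y : Fin (W n v u) := ⟨1, by omega⟩
  have hxy : x ≠ y := by simp [x, y, Fin.ext_iff]
  refine ⟨⟨⟨P, fun j => if j ∈ P then (if A j = x then y else x) else x,
    fun j => if j ∈ P then fun _ => true else fun _ => false⟩, ⟨hP, ?_, ?_⟩, ?_, ?_⟩⟩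
  · intro j hj
    simp only [if_pos hj]
    split_ifs with h
    · exact h ▸ hxy.symm
    · exact Ne.symm h
  · intro j hj
    simp [if_neg hj, x]
  · intro j hj
    simp [if_pos hj, firstBit, show 0 < v by linarith [hyp.1]]
  · intro j hj
    simp [if_neg hj]

lemma Hyp.arSupport_nonempty (hyp : Hyp n v u) : Nonempty (ARSupport n v u) :=
  ⟨⟨⟨fun _ => ⟨0, by linarith [hyp.two_le_W]⟩, fun _ _ => false⟩, fun _ => by simp [firstBit]⟩⟩

lemma Hyp.entropy_frv (hyp : Hyp n v u) (F : FBuilder n v u) :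
    entropy (Frv n v u F) = entropy (frvAR F) := by
  obtain ⟨d₀⟩ := hyp.arSupport_nonempty
  have hK : Nat.card (BExtension d₀.1.1) ≠ 0 :=
    have := hyp.bExtension_nonempty d₀.1.1
    Nat.card_pos.ne'
  refine entropy_comp_of_card_fiber_eq toAR hK (fun d => ?_) (frvAR F)
  rw [Nat.card_congr (fiberToAREquiv d), Nat.card_congr (bExtensionEquiv d.1.1 d₀.1.1)]

lemma card_level_le_prod_card_plausible (F : FBuilder n v u) (d : ARSupport n v u) :
    Nat.card {d' // frvAR F d' = frvAR F d} ≤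
      ∏ i, Nat.card (Plausible n v u F (frvAR F d) i) := by
  rw [← Nat.card_pi]
  refine Nat.card_le_card_of_injective
    (fun d' i => ⟨(d'.1.1.1 i, d'.1.1.2 i), d'.1.1.1, d'.1.1.2, d'.1.2, d'.2, rfl, rfl⟩) ?_
  intro a b hab
  have h (i : Fin (M n v)) := congrArg Subtype.val (congrFun hab i)
  simp only [Prod.mk.injEq] at h
  exact Subtype.ext (Subtype.ext (Prod.ext (funext fun i => (h i).1) (funext fun i => (h i).2)))

lemma pow_le_card_arSupport (hv : 0 < v) :
    (W n v u * 2 ^ (v - 1)) ^ M n v ≤ Fintype.card (ARSupport n v u) := by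
  obtain ⟨k, rfl⟩ : ∃ k, v = k + 1 := ⟨v - 1, by omega⟩
  let embed (p : (Fin (M n (k + 1)) → Fin (W n (k + 1) u)) × (Fin (M n (k + 1)) → Fin k → Bool)) :
      ARSupport n (k + 1) u :=
    ⟨(p.1, fun j => Fin.cons false (p.2 j)), fun j => by simp [firstBit]⟩
  have hembed : Function.Injective embed := by
    intro p p' h
    have h := congrArg Subtype.val h
    simp only [embed, Prod.mk.injEq] at h
    exact Prod.ext h.1 (funext fun j => Fin.cons_right_injective _ (congrFun h.2 j))
  calc (W n (k + 1) u * 2 ^ (k + 1 - 1)) ^ M n (k + 1)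
      = Fintype.card ((Fin (M n (k + 1)) → Fin (W n (k + 1) u)) ×
          (Fin (M n (k + 1)) → Fin k → Bool)) := by simp [mul_pow]
    _ ≤ _ := Fintype.card_le_of_injective embed hembed

lemma Hyp.div_mul_two_rpow_le_card_rpow (hyp : Hyp n v u) :
    (u : ℝ) / M n v * 2 ^ ((v : ℝ) - 1) ≤
      (Fintype.card (ARSupport n v u) : ℝ) ^ ((M n v : ℝ)⁻¹) := by
  have hM := hyp.M_pos
  have hv : (v : ℝ) - 1 = ((v - 1 : ℕ) : ℝ) := by
    rw [Nat.cast_sub (by linarith [hyp.1])]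
    simp
  have hu : (u : ℝ) / M n v = W n v u := by
    rw [div_eq_iff (by positivity)]
    exact_mod_cast hyp.u_eq.trans (mul_comm _ _)
  rw [hu, hv, Real.rpow_natCast]
  calc (W n v u : ℝ) * 2 ^ (v - 1)
      = (((W n v u * 2 ^ (v - 1)) ^ M n v : ℕ) : ℝ) ^ ((M n v : ℝ)⁻¹) := by
        push_cast
        rw [Real.pow_rpow_inv_natCast (by positivity) hM.ne']
    _ ≤ _ := Real.rpow_le_rpow (by positivity)
        (by exact_mod_cast pow_le_card_arSupport (by linarith [hyp.1])) (by positivity)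

end Model

/-- **Claim 3.3.** For every deterministic incremental retrieval scheme `(F, G, Query)`
in the model and every real `S ≥ H(F)`: if `i` is drawn uniformly from `{1, …, m}`,
independently of the process, then the expected size of the plausible set satisfies
`E_{i, A, R_A}[ |P_i(F(A, R_A))| ] ≥ (u/m) · 2^{v − 1} · 2^{−S/m}`.

(The marginal distribution of `(A, R_A)` is the uniform distribution on its valid
realizations; the expectation is written out as the corresponding average.) -/
theorem plausible_set_expected_size :
    ∀ n v u : ℕ, Hyp n v u →
    ∀ (F : FBuilder n v u) (G : GBuilder n v u) (Q : QueryFn v),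
      Correct n v u F G Q →
    ∀ S : ℝ, entropy (Frv n v u F) ≤ S →
      ((u : ℝ) / M n v) * 2 ^ ((v : ℝ) - 1) * 2 ^ (-(S / M n v)) ≤
        (∑ i : Fin (M n v),
            ∑ d : (Fin (M n v) → Fin (W n v u)) × (Fin (M n v) → Fin v → Bool),
              Set.indicator {d | ValidAR n v u d.1 d.2}
                (fun d => (Nat.card (Plausible n v u F (F d.1 d.2) i) : ℝ)) d) /
          ((M n v : ℝ) *
            (Nat.card {d : (Fin (M n v) → Fin (W n v u)) × (Fin (M n v) → Fin v → Bool) //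
              ValidAR n v u d.1 d.2} : ℝ)) := by
  intro n v u hyp F G Q _ S hS
  have := hyp.arSupport_nonempty
  have := Fin.pos_iff_nonempty.1 hyp.M_pos
  have hbound := card_rpow_mul_two_rpow_neg_entropy_le (frvAR F)
    (fun d i => Nat.card (Plausible n v u F (frvAR F d) i)) (card_level_le_prod_card_plausible F)
  rw [Fintype.card_fin, ← hyp.entropy_frv F] at hbound
  simp only [sum_indicator_setOf_eq_sum_subtype, Nat.card_eq_fintype_card]
  calc (u : ℝ) / M n v * 2 ^ ((v : ℝ) - 1) * 2 ^ (-(S / M n v))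
      ≤ (Fintype.card (ARSupport n v u) : ℝ) ^ ((M n v : ℝ)⁻¹) *
          2 ^ (-(entropy (Frv n v u F) / M n v)) := by
        refine mul_le_mul hyp.div_mul_two_rpow_le_card_rpow ?_ (by positivity) (by positivity)
        exact Real.rpow_le_rpow_of_exponent_le one_le_two
          (neg_le_neg (div_le_div_of_nonneg_right hS (by positivity)))
    _ ≤ _ := hbound

end Retrieval
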